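/- Let φ : ℂ₀ → ℂ be a non-constant analytic function of the form φ(s) = c₀ s + ψ(s), with c₀ ∈ ℕ₀ and ψ ∈ 𝒟, such that the composition operator C_φ maps A⁺ into itself. Then C_φ : A⁺ → A⁺ is a compact operator if and only if ‖n^{-φ}‖_{A⁺} → 0 as n → ∞; and in that case there exists δ > 0 such that φ(ℂ₀) ⊆ ℂ_δ, i.e. Re φ(s) ≥ δ for all s ∈ ℂ₀. -/

import Mathlib

open Complex Filter
open scoped ENNReal

noncomputable section

/-- `f` has the Dirichlet series `∑ a n * (n+1)^{-s}` on the half-plane `re s > σ`. -/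
def HasDirichletSeriesOn (f : ℂ → ℂ) (a : ℕ → ℂ) (σ : ℝ) : Prop :=
  ∀ s : ℂ, σ < s.re → HasSum (fun n : ℕ => a n * (n + 1 : ℂ) ^ (-s)) (f s)

/-- `f` belongs to the Wiener–Dirichlet algebra `𝒜⁺`, with (absolutely summable)
coefficient sequence `a`, where `a n` is the coefficient of `(n+1)^{-s}`.
The norm of `f` in `𝒜⁺` is `∑' n, Complex.abs (a n)`. -/
def MemAplus (f : ℂ → ℂ) (a : ℕ → ℂ) : Prop :=
  Summable (fun n : ℕ => ‖a n‖) ∧ HasDirichletSeriesOn f a 0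

/-- `ψ` belongs to the class `𝒟` of convergent Dirichlet series: it is analytic on
`re s > 0` and is representable by a convergent Dirichlet series for `re s` large enough. -/
def MemD (ψ : ℂ → ℂ) : Prop :=
  DifferentiableOn ℂ ψ {s : ℂ | 0 < s.re} ∧ ∃ a σ, HasDirichletSeriesOn ψ a σ

/-- The Banach space `ℓ¹(ℕ)` of coefficient sequences, modelling the Wiener–Dirichlet
algebra `𝒜⁺` (the sequence `a` corresponds to the Dirichlet series `∑ a n (n+1)^{-s}`). -/
abbrev l1N := lp (fun _ : ℕ => ℂ) 1

/-- `T` is the composition operator `C_φ` on `𝒜⁺`, read through coefficient sequences: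
for every `a ∈ ℓ¹` and every `s` with `re s > 0`, the Dirichlet series with coefficients
`T a` evaluates at `s` to the Dirichlet series with coefficients `a` evaluated at `φ s`. -/
def IsCompOp (φ : ℂ → ℂ) (T : l1N →L[ℂ] l1N) : Prop :=
  ∀ (a : l1N) (s : ℂ), 0 < s.re →
    ∑' n : ℕ, (T a) n * (n + 1 : ℂ) ^ (-s) = ∑' n : ℕ, a n * (n + 1 : ℂ) ^ (-(φ s))

/-!
Write `bₙ = C_φ(eₙ) ∈ ℓ¹`. The identity `∑ₘ bₙ(m) (m+1)^{-s} = (n+1)^{-φ(s)}` gives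
`(n+1)^{-Re φ(s)} ≤ ‖bₙ‖ ≤ ‖C_φ‖`, so `Re φ ≥ 0` on `ℂ₀`, and then `Re φ > 0` by the open
mapping theorem. Evaluating at a large integer `s = k` isolates the `m`-th coefficient up to
an error `((m+1)/(m+2))^k ‖C_φ‖`, so by strong induction on `m` every coordinate of `bₙ` tends
to `0` as `n → ∞`. A compact operator maps the `eₙ` into a compact set, on which coordinatewise
convergence to `0` is norm convergence; conversely, if `‖bₙ‖ → 0` then `C_φ` is the norm limit
of its finite-rank truncations. Finally, `‖bₙ‖ ≤ 1/2` for a single `n ≥ 1` already gives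
`Re φ ≥ log 2 / log (n+1)`.
-/

open scoped Topology

lemma summable_norm_l1N (b : l1N) : Summable fun m => ‖b m‖ := by
  simpa using (lp.memℓp b).summable (p := 1) one_pos

lemma norm_l1N_eq_tsum (b : l1N) : ‖b‖ = ∑' m, ‖b m‖ := by
  simpa using lp.norm_eq_tsum_rpow (p := 1) (by norm_num) b

theorem lp.tendsto_zero_of_isCompact {ι α : Type*} {E : α → Type*}
    [∀ i, NormedAddCommGroup (E i)] {p : ℝ≥0∞} [Fact (1 ≤ p)] {l : Filter ι}
    {K : Set (lp E p)} (hK : IsCompact K) {x : ι → lp E p} (hxK : ∀ᶠ n in l, x n ∈ K)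
    (hx : ∀ i, Tendsto (fun n => x n i) l (𝓝 0)) : Tendsto x l (𝓝 0) := by
  refine hK.tendsto_nhds_of_unique_mapClusterPt hxK fun y _ hy => lp.ext (funext fun i => ?_)
  have hyi : MapClusterPt (y i) l (fun n => x n i) :=
    hy.continuousAt_comp (f := fun b : lp E p => b i)
      ((continuous_apply i).comp (lp.uniformContinuous_coe (p := p)).continuous).continuousAt
  exact eq_of_nhds_neBot (hyi.neBot.mono (inf_le_inf_left _ (hx i)))

section OperatorsOnL1

variable {F : Type*} [NormedAddCommGroup F] [NormedSpace ℂ F]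

lemma hasSum_smul_apply_single (S : l1N →L[ℂ] F) (a : l1N) :
    HasSum (fun n => a n • S (lp.single 1 n 1)) (S a) := by
  convert (lp.hasSum_single (p := 1) ENNReal.one_ne_top a).mapL S using 2 with n
  rw [← map_smul, ← lp.single_smul, smul_eq_mul, mul_one]

lemma opNorm_le_of_norm_apply_single_le (S : l1N →L[ℂ] F) {C : ℝ} (hC : 0 ≤ C)
    (h : ∀ n, ‖S (lp.single 1 n 1)‖ ≤ C) : ‖S‖ ≤ C := by
  refine S.opNorm_le_bound hC fun a => ?_
  rw [norm_l1N_eq_tsum, mul_comm, ← tsum_mul_right]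
  refine (hasSum_smul_apply_single S a).norm_le_of_bounded
    ((summable_norm_l1N a).mul_right C).hasSum fun n => ?_
  rw [norm_smul]
  exact mul_le_mul_of_nonneg_left (h n) (norm_nonneg _)

lemma norm_apply_single_le_opNorm (S : l1N →L[ℂ] F) (n : ℕ) : ‖S (lp.single 1 n 1)‖ ≤ ‖S‖ := by
  simpa using S.le_opNorm (lp.single 1 n 1)

def truncation (S : l1N →L[ℂ] F) (N : ℕ) : l1N →L[ℂ] F :=
  ∑ n ∈ Finset.range N, (lp.evalCLM ℂ (fun _ : ℕ => ℂ) 1 n).smulRight (S (lp.single 1 n 1))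

lemma truncation_apply_single (S : l1N →L[ℂ] F) (N n : ℕ) :
    truncation S N (lp.single 1 n 1) = if n < N then S (lp.single 1 n 1) else 0 := by
  simp [truncation, lp.evalCLM, Pi.single_apply, ite_smul]

lemma isCompactOperator_truncation (S : l1N →L[ℂ] F) (N : ℕ) :
    IsCompactOperator (truncation S N) := by
  refine Submodule.sum_mem (compactOperator (RingHom.id ℂ) l1N F) fun n _ => ?_
  exact (isCompactOperator_of_locallyCompactSpace_dom (lp.evalCLM ℂ (fun _ : ℕ => ℂ) 1 n)).clm_comp
    (ContinuousLinearMap.toSpanSingleton ℂ (S (lp.single 1 n 1)))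

theorem isCompactOperator_of_tendsto_norm_apply_single [CompleteSpace F] (S : l1N →L[ℂ] F)
    (h : Tendsto (fun n => ‖S (lp.single 1 n 1)‖) atTop (𝓝 0)) : IsCompactOperator S := by
  refine isCompactOperator_of_tendsto (l := atTop) (F := truncation S) ?_
    (.of_forall (isCompactOperator_truncation S))
  rw [Metric.tendsto_atTop] at h ⊢
  intro ε hε
  obtain ⟨N, hN⟩ := h (ε / 2) (half_pos hε)
  refine ⟨N, fun M hM => ?_⟩
  rw [dist_eq_norm]
  refine (opNorm_le_of_norm_apply_single_le _ (half_pos hε).le fun n => ?_).trans_lt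
    (half_lt_self hε)
  rw [sub_apply, truncation_apply_single]
  split_ifs with hn
  · simpa using (half_pos hε).le
  · simpa [Real.dist_eq] using (hN n (by omega)).le

end OperatorsOnL1

lemma norm_natCast_add_one_cpow (m : ℕ) (s : ℂ) :
    ‖(m + 1 : ℂ) ^ s‖ = ((m : ℝ) + 1) ^ s.re := by
  exact_mod_cast Complex.norm_natCast_cpow_of_pos m.succ_pos s

lemma norm_mul_natCast_add_one_cpow_neg_le (z : ℂ) (m : ℕ) {s : ℂ} (hs : 0 ≤ s.re) :
    ‖z * (m + 1 : ℂ) ^ (-s)‖ ≤ ‖z‖ := by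
  rw [norm_mul, norm_natCast_add_one_cpow]
  exact mul_le_of_le_one_right (norm_nonneg _)
    (Real.rpow_le_one_of_one_le_of_nonpos (le_add_of_nonneg_left m.cast_nonneg)
      (by simpa using hs))

lemma norm_le_of_tsum_mul_cpow (b : ℕ → ℂ) (hb : Summable fun j => ‖b j‖) (k m : ℕ) :
    ‖b m‖ ≤ ((m : ℝ) + 1) ^ k *
        (‖∑' j, b j * (j + 1 : ℂ) ^ (-(k : ℂ))‖ + ∑ j ∈ Finset.range m, ‖b j‖) +
      (((m : ℝ) + 1) / (m + 2)) ^ k * ∑' j, ‖b j‖ := by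
  set f : ℕ → ℂ := fun j => b j * (j + 1 : ℂ) ^ (-(k : ℂ))
  have hf_norm (j : ℕ) : ‖f j‖ = ‖b j‖ * (((j : ℝ) + 1) ^ k)⁻¹ := by
    rw [norm_mul, norm_natCast_add_one_cpow, neg_re, natCast_re, Real.rpow_neg (by positivity),
      Real.rpow_natCast]
  have hf_le (j : ℕ) : ‖f j‖ ≤ ‖b j‖ := by
    rw [hf_norm]
    exact mul_le_of_le_one_right (norm_nonneg _)
      (inv_le_one_of_one_le₀ (one_le_pow₀ (le_add_of_nonneg_left j.cast_nonneg)))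
  have hfs : Summable f := .of_norm_bounded hb hf_le
  have hsplit : f m = ∑' j, f j - ∑ j ∈ Finset.range m, f j - ∑' j, f (j + (m + 1)) := by
    rw [← hfs.sum_add_tsum_nat_add (m + 1), Finset.sum_range_succ]
    ring
  have htail : ‖∑' j, f (j + (m + 1))‖ ≤ (((m : ℝ) + 2) ^ k)⁻¹ * ∑' j, ‖b j‖ := by
    have hle (j : ℕ) : ‖f (j + (m + 1))‖ ≤ (((m : ℝ) + 2) ^ k)⁻¹ * ‖b (j + (m + 1))‖ := by
      rw [hf_norm, mul_comm]
      refine mul_le_mul_of_nonneg_right (inv_anti₀ (by positivity) ?_) (norm_nonneg _)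
      exact pow_le_pow_left₀ (by positivity) (by push_cast; linarith) k
    calc ‖∑' j, f (j + (m + 1))‖
        ≤ ∑' j, (((m : ℝ) + 2) ^ k)⁻¹ * ‖b (j + (m + 1))‖ :=
          tsum_of_norm_bounded ((hb.comp_injective (add_left_injective _)).mul_left _).hasSum hle
      _ ≤ (((m : ℝ) + 2) ^ k)⁻¹ * ∑' j, ‖b j‖ := by
          rw [tsum_mul_left]
          exact mul_le_mul_of_nonneg_left
            (tsum_comp_le_tsum_of_inj hb (fun _ => norm_nonneg _) (add_left_injective _))
            (by positivity)
  have hfm : ‖f m‖ ≤ ‖∑' j, f j‖ + ∑ j ∈ Finset.range m, ‖b j‖ +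
      (((m : ℝ) + 2) ^ k)⁻¹ * ∑' j, ‖b j‖ := by
    rw [hsplit]
    refine (norm_sub_le _ _).trans (add_le_add ((norm_sub_le _ _).trans ?_) htail)
    gcongr
    exact (norm_sum_le _ _).trans (Finset.sum_le_sum fun j _ => hf_le j)
  have hbm : ‖b m‖ = ((m : ℝ) + 1) ^ k * ‖f m‖ := by
    rw [hf_norm]; field_simp
  rw [hbm, div_pow, div_eq_mul_inv, mul_assoc, ← mul_add]
  exact mul_le_mul_of_nonneg_left (by linarith) (by positivity)

namespace IsCompOp

variable {φ : ℂ → ℂ} {T : l1N →L[ℂ] l1N}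

lemma hasSum_apply_single (hT : IsCompOp φ T) (n : ℕ) {s : ℂ} (hs : 0 < s.re) :
    HasSum (fun m => T (lp.single 1 n 1) m * (m + 1 : ℂ) ^ (-s)) ((n + 1 : ℂ) ^ (-φ s)) := by
  have hsum : Summable fun m => T (lp.single 1 n 1) m * (m + 1 : ℂ) ^ (-s) :=
    .of_norm_bounded (summable_norm_l1N _) fun m =>
      norm_mul_natCast_add_one_cpow_neg_le _ m hs.le
  convert hsum.hasSum using 1
  rw [hT _ s hs, tsum_eq_single n fun m hm => by rw [lp.single_apply_ne 1 n _ hm, zero_mul],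
    lp.single_apply_self, one_mul]

lemma rpow_neg_re_le_norm (hT : IsCompOp φ T) (n : ℕ) {s : ℂ} (hs : 0 < s.re) :
    ((n : ℝ) + 1) ^ (-(φ s).re) ≤ ‖T (lp.single 1 n 1)‖ := by
  have := (hT.hasSum_apply_single n hs).norm_le_of_bounded
    (summable_norm_l1N (T (lp.single 1 n 1))).hasSum fun m =>
      norm_mul_natCast_add_one_cpow_neg_le _ m hs.le
  rwa [norm_natCast_add_one_cpow, ← norm_l1N_eq_tsum, neg_re] at this

lemma re_nonneg (hT : IsCompOp φ T) {s : ℂ} (hs : 0 < s.re) : 0 ≤ (φ s).re := by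
  by_contra! hneg
  have htend : Tendsto (fun n : ℕ => ((n : ℝ) + 1) ^ (-(φ s).re)) atTop atTop :=
    (tendsto_rpow_atTop (neg_pos.2 hneg)).comp
      (tendsto_atTop_add_const_right _ 1 tendsto_natCast_atTop_atTop)
  obtain ⟨n, hn⟩ := (htend.eventually_gt_atTop ‖T‖).exists
  exact ((hT.rpow_neg_re_le_norm n hs).trans (norm_apply_single_le_opNorm T n)).not_gt hn

lemma re_pos (hT : IsCompOp φ T) (hanal : DifferentiableOn ℂ φ {s : ℂ | 0 < s.re})
    (hnc : ∃ s₁ s₂ : ℂ, 0 < s₁.re ∧ 0 < s₂.re ∧ φ s₁ ≠ φ s₂) {s : ℂ} (hs : 0 < s.re) :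
    0 < (φ s).re := by
  have hU : IsOpen {s : ℂ | 0 < s.re} := isOpen_lt continuous_const continuous_re
  rcases (hanal.analyticOnNhd hU).is_constant_or_isOpen
    (convex_halfSpace_re_gt 0).isPreconnected with ⟨w, hw⟩ | hopen
  · obtain ⟨s₁, s₂, h₁, h₂, hne⟩ := hnc
    exact absurd ((hw s₁ h₁).trans (hw s₂ h₂).symm) hne
  · have himage : φ '' {s | 0 < s.re} ⊆ interior {w : ℂ | 0 ≤ w.re} :=
      interior_maximal (by rintro _ ⟨t, ht, rfl⟩; exact hT.re_nonneg ht) (hopen _ le_rfl hU)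
    rw [interior_setOfPred_le_re] at himage
    exact himage ⟨s, hs, rfl⟩

lemma tendsto_apply_single_apply (hT : IsCompOp φ T)
    (hanal : DifferentiableOn ℂ φ {s : ℂ | 0 < s.re})
    (hnc : ∃ s₁ s₂ : ℂ, 0 < s₁.re ∧ 0 < s₂.re ∧ φ s₁ ≠ φ s₂) (m : ℕ) :
    Tendsto (fun n => T (lp.single 1 n 1) m) atTop (𝓝 0) := by
  induction m using Nat.strong_induction_on with
  | _ m ih =>
  rw [NormedAddGroup.tendsto_nhds_zero]
  intro ε hε
  set r : ℝ := ((m : ℝ) + 1) / (m + 2)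
  obtain ⟨k, hk, hkr⟩ : ∃ k : ℕ, 0 < k ∧ r ^ k * ‖T‖ < ε / 2 := by
    have hr : Tendsto (fun k => r ^ k * ‖T‖) atTop (𝓝 0) := by
      simpa using (tendsto_pow_atTop_nhds_zero_of_lt_one (by positivity)
        ((div_lt_one (by positivity)).2 (by linarith))).mul_const ‖T‖
    obtain ⟨k, hk⟩ := ((hr.eventually_lt_const (half_pos hε)).and (eventually_gt_atTop 0)).exists
    exact ⟨k, hk.2, hk.1⟩
  have hk' : 0 < (k : ℂ).re := by simpa using hk
  set g : ℕ → ℝ := fun n => ((m : ℝ) + 1) ^ k *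
    (((n : ℝ) + 1) ^ (-(φ k).re) + ∑ j ∈ Finset.range m, ‖T (lp.single 1 n 1) j‖)
  have hg : Tendsto g atTop (𝓝 0) := by
    have h1 : Tendsto (fun n : ℕ => ((n : ℝ) + 1) ^ (-(φ k).re)) atTop (𝓝 0) :=
      (tendsto_rpow_neg_atTop (hT.re_pos hanal hnc hk')).comp
        (tendsto_atTop_add_const_right _ 1 tendsto_natCast_atTop_atTop)
    have h2 := tendsto_finsetSum (Finset.range m) fun j hj => (ih j (Finset.mem_range.1 hj)).norm
    simpa using (h1.add h2).const_mul (((m : ℝ) + 1) ^ k)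
  have hbound (n : ℕ) : ‖T (lp.single 1 n 1) m‖ ≤ g n + r ^ k * ‖T‖ := by
    have := norm_le_of_tsum_mul_cpow _ (summable_norm_l1N (T (lp.single 1 n 1))) k m
    rw [(hT.hasSum_apply_single n hk').tsum_eq, norm_natCast_add_one_cpow, ← norm_l1N_eq_tsum,
      neg_re] at this
    exact this.trans (add_le_add le_rfl (mul_le_mul_of_nonneg_left
      (norm_apply_single_le_opNorm T n) (by positivity)))
  filter_upwards [hg.eventually_lt_const (half_pos hε)] with n hn
  linarith [hbound n]

lemma tendsto_norm_apply_single (hT : IsCompOp φ T)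
    (hanal : DifferentiableOn ℂ φ {s : ℂ | 0 < s.re})
    (hnc : ∃ s₁ s₂ : ℂ, 0 < s₁.re ∧ 0 < s₂.re ∧ φ s₁ ≠ φ s₂) (hc : IsCompactOperator T) :
    Tendsto (fun n => ‖T (lp.single 1 n 1)‖) atTop (𝓝 0) := by
  obtain ⟨K, hK, hTK⟩ := hc.image_closedBall_subset_compact (f := (T : l1N →ₗ[ℂ] l1N)) 1
  have := lp.tendsto_zero_of_isCompact hK (.of_forall fun n => hTK ⟨_, by simp, rfl⟩)
    (hT.tendsto_apply_single_apply hanal hnc)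
  simpa using this.norm

lemma exists_pos_le_re (hT : IsCompOp φ T)
    (h : Tendsto (fun n => ‖T (lp.single 1 n 1)‖) atTop (𝓝 0)) :
    ∃ δ : ℝ, 0 < δ ∧ ∀ s : ℂ, 0 < s.re → δ ≤ (φ s).re := by
  obtain ⟨n, hn, hn1⟩ := ((h.eventually_lt_const (by norm_num : (0 : ℝ) < 2⁻¹)).and
    (eventually_gt_atTop 0)).exists
  have hb : 1 < (n : ℝ) + 1 := by simpa using hn1
  have hlog : 0 < Real.log ((n : ℝ) + 1) := Real.log_pos hb
  refine ⟨Real.log 2 / Real.log ((n : ℝ) + 1), by positivity, fun s hs => ?_⟩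
  have hle : ((n : ℝ) + 1) ^ (-(φ s).re) ≤ 2⁻¹ := (hT.rpow_neg_re_le_norm n hs).trans hn.le
  have := Real.log_le_log (by positivity) hle
  rw [Real.log_rpow (by positivity), Real.log_inv] at this
  rw [div_le_iff₀ hlog]
  linarith

end IsCompOp

theorem statement_2_general (φ : ℂ → ℂ)
    (hanal : DifferentiableOn ℂ φ {s : ℂ | 0 < s.re})
    (hnc : ∃ s₁ s₂ : ℂ, 0 < s₁.re ∧ 0 < s₂.re ∧ φ s₁ ≠ φ s₂)
    (T : l1N →L[ℂ] l1N) (hT : IsCompOp φ T) :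
    (IsCompactOperator ⇑T ↔
      Tendsto (fun n : ℕ => ‖T (lp.single 1 n (1 : ℂ))‖) atTop (nhds 0)) ∧
    (IsCompactOperator ⇑T →
      ∃ δ : ℝ, 0 < δ ∧ ∀ s : ℂ, 0 < s.re → δ ≤ (φ s).re) := by
  have hiff : IsCompactOperator T ↔ Tendsto (fun n => ‖T (lp.single 1 n 1)‖) atTop (𝓝 0) :=
    ⟨hT.tendsto_norm_apply_single hanal hnc, isCompactOperator_of_tendsto_norm_apply_single T⟩
  exact ⟨hiff, fun hc => hT.exists_pos_le_re (hiff.1 hc)⟩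

/-- Theorem 2.3 (b)(i).  Let `φ` be a non-constant analytic function on
`ℂ₀` of the form `φ(s) = c₀ s + ψ(s)` with `c₀ ∈ ℕ₀`, `ψ ∈ 𝒟`, such that the composition
operator `C_φ` maps `𝒜⁺` into itself.  Then `C_φ` is compact iff `‖n^{-φ}‖_{𝒜⁺} → 0`
(note `‖n^{-φ}‖_{𝒜⁺} = ‖T(δ_n)‖` since `n^{-φ} = C_φ(n^{-s})`); and in that case
`φ(ℂ₀) ⊆ ℂ_δ` for some `δ > 0`, i.e. `re (φ s) ≥ δ` on `ℂ₀`. -/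
theorem statement_2 (φ ψ : ℂ → ℂ) (c₀ : ℕ)
    (hform : ∀ s : ℂ, 0 < s.re → φ s = (c₀ : ℂ) * s + ψ s)
    (hψ : MemD ψ)
    (hanal : DifferentiableOn ℂ φ {s : ℂ | 0 < s.re})
    (hnc : ∃ s₁ s₂ : ℂ, 0 < s₁.re ∧ 0 < s₂.re ∧ φ s₁ ≠ φ s₂)
    (T : l1N →L[ℂ] l1N) (hT : IsCompOp φ T) :
    (IsCompactOperator ⇑T ↔
      Tendsto (fun n : ℕ => ‖T (lp.single 1 n (1 : ℂ))‖) atTop (nhds 0)) ∧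
    (IsCompactOperator ⇑T →
      ∃ δ : ℝ, 0 < δ ∧ ∀ s : ℂ, 0 < s.re → δ ≤ (φ s).re) :=
  statement_2_general φ hanal hnc T hT
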